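/- Every triangle in the hyperbolic plane ℍ² is δ-thin with δ = ln(1+√2): each side lies in the closed δ-neighborhood of the union of the other two sides. -/

import Mathlib

/-- `γ` restricted to the parameter set `s` is an isometric (geodesic) parametrization. -/
def IsGeodesicOn {X : Type*} [MetricSpace X] (γ : ℝ → X) (s : Set ℝ) : Prop :=
  ∀ a ∈ s, ∀ b ∈ s, dist (γ a) (γ b) = |a - b|

/-- `γ` is a geodesic from `x` to `y`, parametrized by `[0, dist x y]`. -/
def GeodesicFrom {X : Type*} [MetricSpace X] (γ : ℝ → X) (x y : X) : Prop :=
  IsGeodesicOn γ (Set.Icc 0 (dist x y)) ∧ γ 0 = x ∧ γ (dist x y) = y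

/-- A geodesic metric space: any two points are joined by a geodesic. -/
def GeodesicSpace (X : Type*) [MetricSpace X] : Prop :=
  ∀ x y : X, ∃ γ : ℝ → X, GeodesicFrom γ x y

/-- A geodesic triangle: three vertices together with geodesic sides joining them. -/
structure GeoTriangle (X : Type*) [MetricSpace X] where
  a : X
  b : X
  c : X
  s1 : ℝ → X
  s2 : ℝ → X
  s3 : ℝ → X
  h1 : GeodesicFrom s1 a b
  h2 : GeodesicFrom s2 b c
  h3 : GeodesicFrom s3 c a

/-- The i-th side of a geodesic triangle, as a subset of `X`. -/
def GeoTriangle.side {X : Type*} [MetricSpace X] (T : GeoTriangle X) : Fin 3 → Set X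
  | 0 => T.s1 '' Set.Icc 0 (dist T.a T.b)
  | 1 => T.s2 '' Set.Icc 0 (dist T.b T.c)
  | 2 => T.s3 '' Set.Icc 0 (dist T.c T.a)

/-- A triangle is δ-thin if each side lies in the closed δ-neighborhood of the
union of the other two sides. -/
def IsThin {X : Type*} [MetricSpace X] (δ : ℝ) (T : GeoTriangle X) : Prop :=
  ∀ i : Fin 3, ∀ p ∈ T.side i, ∃ q ∈ T.side (i + 1) ∪ T.side (i + 2), dist p q ≤ δ

/-- `X` is δ-hyperbolic: every geodesic triangle is δ-thin. -/
def Hyperbolic (X : Type*) [MetricSpace X] (δ : ℝ) : Prop :=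
  ∀ T : GeoTriangle X, IsThin δ T

/-!
The isometries of `ℍ` act transitively on pairs (point, geodesic through it), so we may assume
that `p = I` and that the side `[a, b]` lies on the imaginary axis, `a` below and `b` above `I`;
inverting in the unit circle and reflecting in the axis, also `|c| ≥ 1` and `0 ≤ Re c`.
The closed ball of radius `log (1 + √2) = arsinh 1` about `I` is the Euclidean disc
`|z - √2 I| ≤ 1`. If it contains neither `a` nor `b`, then the arc `[a, c]` of the semicircle
through `a` and `c` either crosses the unit circle inside the disc or enters the disc through its
boundary, or else `c` lies in the square `0 < Re c ≤ 1`, `Im c ≤ √2`, and then `[b, c]` crosses the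
horizontal diameter of the disc.

Since `ℍ` is uniquely geodesic, the sides of a geodesic triangle are the metric segments
`{z | d x z + d z y = d x y}`, and these are what the argument computes with.
-/

open Set

section MetricSegment

variable {X Y : Type*} [MetricSpace X] [MetricSpace Y]

def metricSegment (x y : X) : Set X := {z | dist x z + dist z y = dist x y}

theorem left_mem_metricSegment (x y : X) : x ∈ metricSegment x y := by
  simp [metricSegment]

theorem right_mem_metricSegment (x y : X) : y ∈ metricSegment x y := by
  simp [metricSegment]

theorem metricSegment_comm (x y : X) : metricSegment x y = metricSegment y x := by
  ext z
  simp only [metricSegment, mem_ofPred_eq]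
  rw [dist_comm x z, dist_comm z y, dist_comm x y, add_comm]

theorem IsometryEquiv.mem_metricSegment_iff (e : X ≃ᵢ Y) {x y z : X} :
    e z ∈ metricSegment (e x) (e y) ↔ z ∈ metricSegment x y := by
  simp only [metricSegment, mem_ofPred_eq, e.dist_eq]

namespace GeodesicFrom

variable {γ : ℝ → X} {x y : X} {t : ℝ}

theorem dist_left (hγ : GeodesicFrom γ x y) (ht : t ∈ Icc 0 (dist x y)) : dist x (γ t) = t := by
  obtain ⟨hiso, h0, -⟩ := hγ
  rw [← h0, hiso 0 (left_mem_Icc.2 dist_nonneg) t ht, abs_sub_comm, sub_zero, abs_of_nonneg ht.1]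

theorem dist_right (hγ : GeodesicFrom γ x y) (ht : t ∈ Icc 0 (dist x y)) :
    dist (γ t) y = dist x y - t := by
  obtain ⟨hiso, -, h1⟩ := hγ
  rw [← h1, hiso t ht _ (right_mem_Icc.2 dist_nonneg), h1, abs_sub_comm,
    abs_of_nonneg (sub_nonneg.2 ht.2)]

theorem mem_metricSegment (hγ : GeodesicFrom γ x y) (ht : t ∈ Icc 0 (dist x y)) :
    γ t ∈ metricSegment x y := by
  rw [metricSegment, mem_ofPred_eq, hγ.dist_left ht, hγ.dist_right ht, add_sub_cancel]

theorem metricSegment_subset_image (hγ : GeodesicFrom γ x y)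
    (huniq : ∀ z ∈ metricSegment x y, ∀ z' ∈ metricSegment x y, dist x z = dist x z' → z = z') :
    metricSegment x y ⊆ γ '' Icc 0 (dist x y) := by
  intro z hz
  have ht : dist x z ∈ Icc 0 (dist x y) :=
    ⟨dist_nonneg, by rw [← hz]; exact le_add_of_nonneg_right dist_nonneg⟩
  exact ⟨dist x z, ht, huniq _ (hγ.mem_metricSegment ht) _ hz (hγ.dist_left ht)⟩

end GeodesicFrom

def NearSides (δ : ℝ) (p a b c : X) : Prop :=
  ∃ q ∈ metricSegment b c ∪ metricSegment c a, dist p q ≤ δ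

variable {δ : ℝ} {p a b c : X}

theorem nearSides_swap : NearSides δ p b a c ↔ NearSides δ p a b c := by
  rw [NearSides, NearSides, metricSegment_comm a c, metricSegment_comm c b, union_comm]

theorem IsometryEquiv.nearSides_iff (e : X ≃ᵢ Y) :
    NearSides δ (e p) (e a) (e b) (e c) ↔ NearSides δ p a b c := by
  simp only [NearSides, e.surjective.exists, mem_union, e.mem_metricSegment_iff, e.dist_eq]

theorem nearSides_of_dist_le (h : dist p a ≤ δ ∨ dist p b ≤ δ ∨ dist p c ≤ δ) :
    NearSides δ p a b c := by
  rcases h with h | h | h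
  · exact ⟨a, .inr (right_mem_metricSegment c a), h⟩
  · exact ⟨b, .inl (left_mem_metricSegment b c), h⟩
  · exact ⟨c, .inl (right_mem_metricSegment b c), h⟩

end MetricSegment

namespace UpperHalfPlane

open Real
open scoped MatrixGroups

theorem dist_log_im_lt {z w : ℍ} (h : z.re ≠ w.re) : dist (log z.im) (log w.im) < dist z w :=
  calc
    dist (log z.im) (log w.im) = dist (mk ⟨0, z.im⟩ z.im_pos) (mk ⟨0, w.im⟩ w.im_pos) :=
      Eq.symm <| dist_of_re_eq rfl
    _ < dist z w := by
      simp_rw [dist_eq]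
      dsimp only [coe_mk, mk_im]
      gcongr
      refine arsinh_lt_arsinh.2 (div_lt_div_of_pos_right ?_ (by positivity))
      rw [Complex.dist_eq_re_im, Complex.dist_eq_re_im]
      apply sqrt_lt_sqrt (by positivity)
      have : 0 < (z.re - w.re) ^ 2 := by positivity [sub_ne_zero.2 h]
      simpa using this

theorem metricSegment_of_re_eq {x y : ℍ} (hre : x.re = y.re) (him : x.im ≤ y.im) :
    metricSegment x y = {z | z.re = x.re ∧ x.im ≤ z.im ∧ z.im ≤ y.im} := by
  have hxy : dist x y = log y.im - log x.im := by
    rw [dist_of_re_eq hre, dist_comm, Real.dist_eq, abs_of_nonneg]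
    exact sub_nonneg.2 (log_le_log x.im_pos him)
  ext z
  simp only [metricSegment, mem_ofPred_eq]
  constructor
  · intro hz
    have hzx : z.re = x.re := by
      by_contra hne
      have h1 := dist_log_im_lt (Ne.symm hne)
      have h2 := dist_log_im_le z y
      rw [Real.dist_eq] at h1 h2
      linarith [abs_sub_le (log x.im) (log z.im) (log y.im), neg_abs_le (log x.im - log y.im)]
    rw [dist_of_re_eq hzx.symm, dist_of_re_eq (hzx.trans hre), hxy, Real.dist_eq,
      Real.dist_eq] at hz
    refine ⟨hzx, (log_le_log_iff x.im_pos z.im_pos).1 ?_, (log_le_log_iff z.im_pos y.im_pos).1 ?_⟩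
    · linarith [le_abs_self (log x.im - log z.im), neg_abs_le (log z.im - log y.im)]
    · linarith [neg_abs_le (log x.im - log z.im), le_abs_self (log z.im - log y.im)]
  · rintro ⟨hzx, hxz, hzy⟩
    rw [dist_of_re_eq hzx.symm, dist_of_re_eq (hzx.trans hre), hxy, Real.dist_eq, Real.dist_eq,
      abs_of_nonpos (sub_nonpos.2 (log_le_log x.im_pos hxz)),
      abs_of_nonpos (sub_nonpos.2 (log_le_log z.im_pos hzy))]
    ring

theorem re_eq_of_mem_metricSegment {x y z : ℍ} (hre : x.re = y.re) (hz : z ∈ metricSegment x y) :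
    z.re = x.re := by
  rcases le_total x.im y.im with hxy | hxy
  · rw [metricSegment_of_re_eq hre hxy] at hz
    exact hz.1
  · rw [metricSegment_comm, metricSegment_of_re_eq hre.symm hxy] at hz
    exact hz.1.trans hre.symm

theorem eq_of_mem_metricSegment_of_re_eq {x y z z' : ℍ} (hre : x.re = y.re)
    (hz : z ∈ metricSegment x y) (hz' : z' ∈ metricSegment x y) (h : dist x z = dist x z') :
    z = z' := by
  have hzx := re_eq_of_mem_metricSegment hre hz
  have hz'x := re_eq_of_mem_metricSegment hre hz'
  suffices log z.im = log z'.im by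
    rw [← dist_eq_zero, dist_of_re_eq (hzx.trans hz'x.symm), this, dist_self]
  rw [dist_of_re_eq hzx.symm, dist_of_re_eq hz'x.symm, Real.dist_eq, Real.dist_eq] at h
  rcases le_total x.im y.im with hxy | hxy
  · rw [metricSegment_of_re_eq hre hxy] at hz hz'
    rwa [abs_of_nonpos (sub_nonpos.2 (log_le_log x.im_pos hz.2.1)),
      abs_of_nonpos (sub_nonpos.2 (log_le_log x.im_pos hz'.2.1)), neg_sub, neg_sub,
      sub_left_inj] at h
  · rw [metricSegment_comm, metricSegment_of_re_eq hre.symm hxy] at hz hz'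
    rwa [abs_of_nonneg (sub_nonneg.2 (log_le_log z.im_pos hz.2.2)),
      abs_of_nonneg (sub_nonneg.2 (log_le_log z'.im_pos hz'.2.2)), sub_right_inj] at h

instance : IsIsometricVAdd ℝ ℍ := ⟨isometry_real_vadd⟩

instance : IsIsometricSMul {x : ℝ // 0 < x} ℍ := ⟨isometry_pos_mul⟩

def reflection : ℍ ≃ᵢ ℍ where
  toFun z := mk ⟨-z.re, z.im⟩ z.im_pos
  invFun z := mk ⟨-z.re, z.im⟩ z.im_pos
  left_inv z := ext_re_im (neg_neg z.re) rfl
  right_inv z := ext_re_im (neg_neg z.re) rfl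
  isometry_toFun := Isometry.of_dist_eq fun z w => by
    simp only [dist_eq, Complex.dist_eq_re_im, coe_re, coe_im, mk_im]
    ring_nf

@[simp] theorem reflection_re (z : ℍ) : (reflection z).re = -z.re := rfl

@[simp] theorem reflection_im (z : ℍ) : (reflection z).im = z.im := rfl

def negInvSub (u : ℝ) : SL(2, ℝ) :=
  ⟨!![0, -1; 1, -u], by simp [Matrix.det_fin_two]⟩

theorem coe_negInvSub_smul (u : ℝ) (z : ℍ) : ((negInvSub u • z : ℍ) : ℂ) = -1 / (z - u) := by
  rw [coe_specialLinearGroup_apply]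
  simp [negInvSub, sub_eq_add_neg]

theorem negInvSub_smul_re (u : ℝ) (z : ℍ) :
    (negInvSub u • z).re = -(z.re - u) / ((z.re - u) ^ 2 + z.im ^ 2) := by
  rw [← coe_re, coe_negInvSub_smul, Complex.div_re]
  simp [Complex.normSq_apply, sq]

theorem negInvSub_smul_im (u : ℝ) (z : ℍ) :
    (negInvSub u • z).im = z.im / ((z.re - u) ^ 2 + z.im ^ 2) := by
  rw [← coe_im, coe_negInvSub_smul, Complex.div_im]
  simp [Complex.normSq_apply, sq, neg_div]

/-- The geodesic `|z - k| ^ 2 = k ^ 2 + ρ`, written so that it is linear in `(k, ρ)`; its left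
end on the real axis is `k - √(k ^ 2 + ρ)`. -/
def semicircle (k ρ : ℝ) : Set ℍ := {z | z.re ^ 2 + z.im ^ 2 = 2 * k * z.re + ρ}

section Semicircle

variable {k ρ : ℝ} {x y z : ℍ}

theorem sq_add_pos_of_mem_semicircle (hz : z ∈ semicircle k ρ) : 0 < k ^ 2 + ρ := by
  nlinarith [pow_pos z.im_pos 2, hz.out, sq_nonneg (z.re - k)]

theorem sq_add_sq_eq_of_mem_semicircle (hz : z ∈ semicircle k ρ) :
    (z.re - (k - √(k ^ 2 + ρ))) ^ 2 + z.im ^ 2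
      = 2 * √(k ^ 2 + ρ) * (z.re - (k - √(k ^ 2 + ρ))) := by
  linear_combination hz.out - sq_sqrt (sq_add_pos_of_mem_semicircle hz).le

theorem sub_left_end_pos_of_mem_semicircle (hz : z ∈ semicircle k ρ) :
    0 < z.re - (k - √(k ^ 2 + ρ)) := by
  have hR := sq_add_pos_of_mem_semicircle hz
  have : 0 < 2 * √(k ^ 2 + ρ) * (z.re - (k - √(k ^ 2 + ρ))) := by
    rw [← sq_add_sq_eq_of_mem_semicircle hz]; positivity [z.im_pos]
  exact pos_of_mul_pos_right this (by positivity)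

theorem negInvSub_smul_re_of_mem_semicircle (hz : z ∈ semicircle k ρ) :
    (negInvSub (k - √(k ^ 2 + ρ)) • z).re = -1 / (2 * √(k ^ 2 + ρ)) := by
  rw [negInvSub_smul_re, sq_add_sq_eq_of_mem_semicircle hz]
  have := sub_left_end_pos_of_mem_semicircle hz
  field_simp

theorem negInvSub_smul_im_of_mem_semicircle (hz : z ∈ semicircle k ρ) :
    (negInvSub (k - √(k ^ 2 + ρ)) • z).im
      = z.im / (z.re - (k - √(k ^ 2 + ρ))) / (2 * √(k ^ 2 + ρ)) := by
  rw [negInvSub_smul_im, sq_add_sq_eq_of_mem_semicircle hz, div_div, mul_comm]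

theorem im_div_sub_left_end_anti (hz : z ∈ semicircle k ρ) (hy : y ∈ semicircle k ρ)
    (hzy : z.re ≤ y.re) :
    y.im / (y.re - (k - √(k ^ 2 + ρ))) ≤ z.im / (z.re - (k - √(k ^ 2 + ρ))) := by
  have hz' := sq_add_sq_eq_of_mem_semicircle hz
  have hy' := sq_add_sq_eq_of_mem_semicircle hy
  have hR := sq_add_pos_of_mem_semicircle hz
  set u := k - √(k ^ 2 + ρ)
  have hzu := sub_left_end_pos_of_mem_semicircle hz
  have hyu := sub_left_end_pos_of_mem_semicircle hy
  rw [div_le_div_iff₀ hyu hzu]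
  refine (pow_le_pow_iff_left₀ (by positivity [y.im_pos]) (by positivity [z.im_pos])
    two_ne_zero).1 ?_
  have key : (z.im * (y.re - u)) ^ 2 - (y.im * (z.re - u)) ^ 2
      = 2 * √(k ^ 2 + ρ) * (z.re - u) * (y.re - u) * (y.re - z.re) := by
    linear_combination (y.re - u) ^ 2 * hz' - (z.re - u) ^ 2 * hy'
  have : 0 ≤ 2 * √(k ^ 2 + ρ) * (z.re - u) * (y.re - u) * (y.re - z.re) := by
    have := sub_nonneg.2 hzy
    positivity
  linarith

/-- With `u` the left end of the semicircle, the isometry `z ↦ -1 / (z - u)` straightens it into a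
vertical line, reversing the order of real parts. -/
theorem mem_metricSegment_of_mem_semicircle (hx : x ∈ semicircle k ρ) (hy : y ∈ semicircle k ρ)
    (hz : z ∈ semicircle k ρ) (hxz : x.re ≤ z.re) (hzy : z.re ≤ y.re) :
    z ∈ metricSegment x y := by
  let e := IsometryEquiv.constSMul (negInvSub (k - √(k ^ 2 + ρ))) (X := ℍ)
  have hR : 0 < 2 * √(k ^ 2 + ρ) := by
    have := sq_add_pos_of_mem_semicircle hx
    positivity
  rw [← e.mem_metricSegment_iff, metricSegment_comm]
  simp only [e, IsometryEquiv.constSMul_apply]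
  rw [metricSegment_of_re_eq, mem_ofPred_eq]
  · simp only [negInvSub_smul_re_of_mem_semicircle, negInvSub_smul_im_of_mem_semicircle, hx, hy,
      hz, true_and]
    exact ⟨div_le_div_of_nonneg_right (im_div_sub_left_end_anti hz hy hzy) hR.le,
      div_le_div_of_nonneg_right (im_div_sub_left_end_anti hx hz hxz) hR.le⟩
  · rw [negInvSub_smul_re_of_mem_semicircle hy, negInvSub_smul_re_of_mem_semicircle hx]
  · rw [negInvSub_smul_im_of_mem_semicircle hy, negInvSub_smul_im_of_mem_semicircle hx]
    exact div_le_div_of_nonneg_right (im_div_sub_left_end_anti hx hy (hxz.trans hzy)) hR.le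

end Semicircle

theorem exists_isometryEquiv_re_eq (x y : ℍ) : ∃ e : ℍ ≃ᵢ ℍ, (e x).re = (e y).re := by
  rcases eq_or_ne x.re y.re with h | h
  · exact ⟨.refl ℍ, h⟩
  set k := (x.re ^ 2 + x.im ^ 2 - (y.re ^ 2 + y.im ^ 2)) / (2 * (x.re - y.re))
  have hk : 2 * k * (x.re - y.re) = x.re ^ 2 + x.im ^ 2 - (y.re ^ 2 + y.im ^ 2) := by
    have := sub_ne_zero.2 h
    simp only [k]
    field_simp
  set ρ := x.re ^ 2 + x.im ^ 2 - 2 * k * x.re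
  have hx : x ∈ semicircle k ρ := by simp only [semicircle, mem_ofPred_eq, ρ]; ring
  have hy : y ∈ semicircle k ρ := by
    simp only [semicircle, mem_ofPred_eq, ρ]; linear_combination hk
  refine ⟨IsometryEquiv.constSMul (negInvSub (k - √(k ^ 2 + ρ))), ?_⟩
  simp only [IsometryEquiv.constSMul_apply, negInvSub_smul_re_of_mem_semicircle hx,
    negInvSub_smul_re_of_mem_semicircle hy]

theorem eq_of_mem_metricSegment_of_dist_eq {x y z z' : ℍ} (hz : z ∈ metricSegment x y)
    (hz' : z' ∈ metricSegment x y) (h : dist x z = dist x z') : z = z' := by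
  obtain ⟨e, he⟩ := exists_isometryEquiv_re_eq x y
  rw [← e.mem_metricSegment_iff] at hz hz'
  rw [← e.dist_eq x, ← e.dist_eq x] at h
  exact e.injective (eq_of_mem_metricSegment_of_re_eq he hz hz' h)

theorem _root_.GeodesicFrom.image_eq_metricSegment {γ : ℝ → ℍ} {x y : ℍ}
    (hγ : GeodesicFrom γ x y) : γ '' Icc 0 (dist x y) = metricSegment x y :=
  subset_antisymm (image_subset_iff.2 fun _ ht => hγ.mem_metricSegment ht)
    (hγ.metricSegment_subset_image fun _ hz _ hz' h => eq_of_mem_metricSegment_of_dist_eq hz hz' h)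

theorem exists_isometryEquiv_eq_I_of_mem_metricSegment {a b p : ℍ}
    (hp : p ∈ metricSegment a b) : ∃ e : ℍ ≃ᵢ ℍ, e p = I ∧ (e a).re = 0 ∧ (e b).re = 0 := by
  obtain ⟨e, he⟩ := exists_isometryEquiv_re_eq a b
  have hpa : (e p).re = (e a).re := re_eq_of_mem_metricSegment he (e.mem_metricSegment_iff.2 hp)
  let f := e.trans ((IsometryEquiv.constVAdd (X := ℍ) (-(e a).re)).trans
    (IsometryEquiv.constSMul (⟨(e p).im⁻¹, inv_pos.2 (e p).im_pos⟩ : {x : ℝ // 0 < x})))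
  refine ⟨f, ext_re_im ?_ ?_, ?_, ?_⟩ <;>
    simp [f, pos_real_re, pos_real_im, vadd_re, vadd_im, hpa, he, (e p).im_pos.ne']

theorem arsinh_one_eq : arsinh 1 = log (1 + √2) := by
  rw [arsinh]; norm_num

theorem dist_I_le_arsinh_one_iff (z : ℍ) :
    dist z I ≤ arsinh 1 ↔ z.re ^ 2 + (z.im - √2) ^ 2 ≤ 1 := by
  rw [dist_le_iff_dist_coe_center_le, Complex.dist_eq_re_im]
  simp [cosh_arsinh, sinh_arsinh, one_add_one_eq_two]

theorem exists_mem_metricSegment_im_eq {b c : ℍ} {t : ℝ} (hb : b.re = 0) (hc : 0 < c.re)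
    (hct : c.im ≤ t) (htb : t ≤ b.im) :
    ∃ q ∈ metricSegment b c, q.im = t ∧ 0 ≤ q.re ∧ q.re ≤ c.re := by
  have ht : 0 < t := c.im_pos.trans_le hct
  set k := (c.re ^ 2 + c.im ^ 2 - b.im ^ 2) / (2 * c.re)
  have hb' : b ∈ semicircle k (b.im ^ 2) := by
    simp only [semicircle, mem_ofPred_eq, hb]; ring
  have hc' : c ∈ semicircle k (b.im ^ 2) := by
    simp only [semicircle, mem_ofPred_eq, k]; field_simp; ring
  have hdisc : 0 ≤ k ^ 2 + b.im ^ 2 - t ^ 2 := by nlinarith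
  set x := k + √(k ^ 2 + b.im ^ 2 - t ^ 2)
  let q : ℍ := mk ⟨x, t⟩ ht
  have hq : q ∈ semicircle k (b.im ^ 2) := by
    simp only [semicircle, mem_ofPred_eq, q, mk_re, mk_im, x]
    linear_combination sq_sqrt hdisc
  have hx0 : 0 ≤ x := by
    have : √(k ^ 2) ≤ √(k ^ 2 + b.im ^ 2 - t ^ 2) := sqrt_le_sqrt (by nlinarith)
    rw [sqrt_sq_eq_abs] at this
    linarith [neg_abs_le k]
  have hxc : x ≤ c.re := by
    have hck : 0 ≤ c.re - k := by nlinarith [hc'.out, c.im_pos]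
    have : √(k ^ 2 + b.im ^ 2 - t ^ 2) ≤ √((c.re - k) ^ 2) :=
      sqrt_le_sqrt (by nlinarith [hc'.out, c.im_pos])
    rw [sqrt_sq hck] at this
    linarith
  exact ⟨q, mem_metricSegment_of_mem_semicircle hb' hc' hq (hb ▸ hx0) hxc, rfl, hx0, hxc⟩

theorem one_sub_sq_le_of_mem_semicircle {k y₀ : ℝ} {c : ℍ} (hc : c ∈ semicircle k (y₀ ^ 2))
    (hc0 : 0 < c.re) (hc1 : 1 ≤ c.re ^ 2 + c.im ^ 2) (hy₀ : y₀ ^ 2 ≤ 1) : 1 - y₀ ^ 2 ≤ 2 * k := by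
  refine le_of_mul_le_mul_right ?_ hc0
  rw [← sub_nonneg]
  rcases le_total c.re 1 with hc1' | hc1'
  · nlinarith [hc.out, mul_nonneg (sub_nonneg.2 hc1') (sub_nonneg.2 hy₀)]
  · nlinarith [hc.out, mul_nonneg (sub_nonneg.2 hc1') (add_nonneg hc0.le (sq_nonneg y₀))]

theorem exists_mem_semicircle_unit_dist_I_le {k y₀ : ℝ} (hy₀ : y₀ ^ 2 < 1)
    (hk : 1 - y₀ ^ 2 ≤ √2 * k) :
    ∃ w ∈ semicircle k (y₀ ^ 2), w.re ^ 2 + w.im ^ 2 = 1 ∧ 0 ≤ w.re ∧ dist w I ≤ arsinh 1 := by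
  have h2 : √2 ^ 2 = 2 := sq_sqrt zero_le_two
  have hk0 : 0 < k := pos_of_mul_pos_right (by linarith) (sqrt_nonneg 2)
  set x := (1 - y₀ ^ 2) / (2 * k)
  have hx : 2 * k * x = 1 - y₀ ^ 2 := mul_div_cancel₀ _ (by positivity)
  have hx0 : 0 ≤ x := div_nonneg (by linarith) (by positivity)
  have hx2 : 2 * x ^ 2 ≤ 1 := by
    have : √2 * x ≤ 1 := by nlinarith
    nlinarith
  have hy : 0 < 1 - x ^ 2 := by linarith
  have hy2 := sq_sqrt hy.le
  set y := √(1 - x ^ 2)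
  have hsy : 1 ≤ √2 * y := by
    refine (one_le_sq_iff_one_le_abs _).1 ?_ |>.trans_eq (abs_of_nonneg (by positivity))
    rw [mul_pow, h2, hy2]; linarith
  refine ⟨mk ⟨x, y⟩ (sqrt_pos.2 hy), ?_, by simp [hy2], hx0, ?_⟩
  · simp only [semicircle, mem_ofPred_eq, mk_re, mk_im, hy2]
    linear_combination -hx
  · rw [dist_I_le_arsinh_one_iff]
    simp only [mk_re, mk_im]
    linear_combination hy2 + h2 + 2 * hsy

theorem exists_mem_semicircle_dist_I_le {k y₀ : ℝ} (hy₀ : 0 < y₀) (hy₀' : y₀ < √2 - 1)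
    (hk : 1 - y₀ ^ 2 ≤ 2 * k) :
    ∃ z ∈ semicircle k (y₀ ^ 2), dist z I ≤ arsinh 1 ∧ 0 < z.re ∧ z.re ≤ 1 := by
  have h2 : √2 ^ 2 = 2 := sq_sqrt zero_le_two
  have hy₀1 : y₀ ^ 2 < 1 := by nlinarith [one_lt_sqrt_two]
  -- on the boundary of the disc, eliminating `im` leaves `8 x² + (2 k x + y₀² - 3)² = 8`
  obtain ⟨x, hx⟩ : ∃ x, (8 + 4 * k ^ 2) * (x * x) + 4 * k * (y₀ ^ 2 - 3) * x
      + ((y₀ ^ 2 - 3) ^ 2 - 8) = 0 := by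
    refine exists_quadratic_eq_zero (by positivity) ⟨√(discrim (8 + 4 * k ^ 2)
      (4 * k * (y₀ ^ 2 - 3)) ((y₀ ^ 2 - 3) ^ 2 - 8)), (mul_self_sqrt ?_).symm⟩
    rw [discrim]
    nlinarith [sq_nonneg y₀]
  set y := √2 * (2 * k * x + y₀ ^ 2 + 1) / 4
  have hdisc : x ^ 2 + (y - √2) ^ 2 = 1 := by
    linear_combination (1 / 8) * hx + ((2 * k * x + y₀ ^ 2 - 3) ^ 2 / 16) * h2
  have hcirc : x ^ 2 + y ^ 2 = 2 * k * x + y₀ ^ 2 := by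
    linear_combination (1 / 8) * hx + ((2 * k * x + y₀ ^ 2 + 1) ^ 2 / 16) * h2
  have hy : √2 - 1 ≤ y := by nlinarith [sq_nonneg x]
  have hx1 : x ≤ 1 := by nlinarith [sq_nonneg (y - √2)]
  have hx0 : 0 < x := by nlinarith [sq_nonneg x]
  exact ⟨mk ⟨x, y⟩ (by linarith), hcirc, (dist_I_le_arsinh_one_iff _).2 hdisc.le, hx0, hx1⟩

theorem im_le_sqrt_two_of_mem_semicircle {k y₀ : ℝ} {c : ℍ} (hc : c ∈ semicircle k (y₀ ^ 2))
    (hk : 0 < k) (hk' : √2 * k < 1 - y₀ ^ 2) (hc1 : c.re ≤ 1) : c.im ≤ √2 := by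
  have h2 : √2 ^ 2 = 2 := sq_sqrt zero_le_two
  have h2k : 2 * k < √2 * (1 - y₀ ^ 2) := by
    have := mul_lt_mul_of_pos_left hk' (sqrt_pos.2 two_pos)
    rwa [← mul_assoc, mul_self_sqrt zero_le_two] at this
  have hkc : 2 * k * c.re ≤ 2 * k := mul_le_of_le_one_right (by positivity) hc1
  have h22 : √2 ≤ √2 ^ 2 := by rw [h2]; linarith [sqrt_two_lt_three_halves]
  have : c.im ^ 2 ≤ √2 ^ 2 := by
    linarith [hc.out, sq_nonneg c.re,
      mul_nonneg (sub_nonneg.2 one_lt_sqrt_two.le) (sq_nonneg y₀)]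
  exact (pow_le_pow_iff_left₀ c.im_pos.le (sqrt_nonneg 2) two_ne_zero).1 this

theorem nearSides_I_of_re_nonneg {a b c : ℍ} (ha : a.re = 0) (hb : b.re = 0)
    (ha1 : a.im ≤ 1) (hb1 : 1 ≤ b.im) (hc0 : 0 ≤ c.re) (hc1 : 1 ≤ c.re ^ 2 + c.im ^ 2) :
    NearSides (arsinh 1) I a b c := by
  by_cases hab : dist I a ≤ arsinh 1 ∨ dist I b ≤ arsinh 1
  · exact nearSides_of_dist_le (hab.imp_right .inl)
  rw [dist_comm, dist_I_le_arsinh_one_iff, dist_comm, dist_I_le_arsinh_one_iff, ha, hb] at hab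
  obtain ⟨hA, hB⟩ := not_or.1 hab
  have h2 : √2 ^ 2 = 2 := sq_sqrt zero_le_two
  have h21 := one_lt_sqrt_two
  have hy₀ : a.im < √2 - 1 := by nlinarith
  have hy₁ : √2 ≤ b.im := by nlinarith
  rcases hc0.eq_or_lt with hc0 | hc0
  · have hc1 : 1 ≤ c.im := by nlinarith [c.im_pos, hc0 ▸ hc1]
    refine ⟨I, .inr ?_, by simp⟩
    rw [metricSegment_comm, metricSegment_of_re_eq (ha.trans hc0) (ha1.trans hc1)]
    exact ⟨ha.symm, ha1, hc1⟩
  set k := (c.re ^ 2 + c.im ^ 2 - a.im ^ 2) / (2 * c.re)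
  have hc : c ∈ semicircle k (a.im ^ 2) := by
    simp only [semicircle, mem_ofPred_eq, k]; field_simp; ring
  have arc : ∀ z ∈ semicircle k (a.im ^ 2), 0 ≤ z.re → z.re ≤ c.re → z ∈ metricSegment c a := by
    intro z hz hz0 hzc
    rw [metricSegment_comm]
    refine mem_metricSegment_of_mem_semicircle ?_ hc hz (ha ▸ hz0) hzc
    simp only [semicircle, mem_ofPred_eq, ha]; ring
  have ha2 : a.im ^ 2 < 1 := by nlinarith [a.im_pos]
  have hk := one_sub_sq_le_of_mem_semicircle hc hc0 hc1 ha2.le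
  have hk0 : 0 < k := by linarith
  rcases le_or_gt (1 - a.im ^ 2) (√2 * k) with hw | hw
  · obtain ⟨w, hw, hw1, hw0, hwI⟩ := exists_mem_semicircle_unit_dist_I_le ha2 hw
    have hwc : w.re ≤ c.re := by nlinarith [hc.out, hw.out]
    exact ⟨w, .inr (arc w hw hw0 hwc), dist_comm I w ▸ hwI⟩
  obtain ⟨z, hz, hzI, hz0, hz1⟩ := exists_mem_semicircle_dist_I_le a.im_pos hy₀ hk
  rcases le_or_gt z.re c.re with hzc | hzc
  · exact ⟨z, .inr (arc z hz hz0.le hzc), dist_comm I z ▸ hzI⟩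
  have hcim := im_le_sqrt_two_of_mem_semicircle hc hk0 hw (hzc.le.trans hz1)
  obtain ⟨q, hq, hqim, hq0, hqc⟩ := exists_mem_metricSegment_im_eq hb hc0 hcim hy₁
  refine ⟨q, .inl hq, ?_⟩
  rw [dist_comm, dist_I_le_arsinh_one_iff, hqim, sub_self]
  nlinarith

theorem nearSides_I_of_one_le_normSq {a b c : ℍ} (ha : a.re = 0) (hb : b.re = 0)
    (ha1 : a.im ≤ 1) (hb1 : 1 ≤ b.im) (hc1 : 1 ≤ c.re ^ 2 + c.im ^ 2) :
    NearSides (arsinh 1) I a b c := by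
  rcases le_total 0 c.re with hc0 | hc0
  · exact nearSides_I_of_re_nonneg ha hb ha1 hb1 hc0 hc1
  have hfix : ∀ z : ℍ, z.re = 0 → reflection z = z := fun z hz => ext_re_im (by simp [hz]) rfl
  rw [← reflection.nearSides_iff, hfix I I_re, hfix a ha, hfix b hb]
  exact nearSides_I_of_re_nonneg ha hb ha1 hb1 (by simpa using hc0) (by simpa using hc1)

theorem nearSides_I_of_im_le_one {a b c : ℍ} (ha : a.re = 0) (hb : b.re = 0)
    (ha1 : a.im ≤ 1) (hb1 : 1 ≤ b.im) : NearSides (arsinh 1) I a b c := by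
  rcases le_total 1 (c.re ^ 2 + c.im ^ 2) with hc1 | hc1
  · exact nearSides_I_of_one_le_normSq ha hb ha1 hb1 hc1
  let e := IsometryEquiv.constSMul (negInvSub 0) (X := ℍ)
  have he_re : ∀ z : ℍ, (e z).re = -z.re / (z.re ^ 2 + z.im ^ 2) := by
    simp [e, negInvSub_smul_re]
  have he_im : ∀ z : ℍ, (e z).im = z.im / (z.re ^ 2 + z.im ^ 2) := by
    simp [e, negInvSub_smul_im]
  have heI : e I = I := ext_re_im (by simp [he_re]) (by simp [he_im])
  rw [← e.nearSides_iff, heI, ← nearSides_swap]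
  have hcpos : 0 < c.re ^ 2 + c.im ^ 2 := by positivity [c.im_pos]
  refine nearSides_I_of_one_le_normSq (by simp [he_re, hb]) (by simp [he_re, ha]) ?_ ?_ ?_
  · rw [he_im, hb, div_le_one (by positivity [b.im_pos])]
    nlinarith
  · rw [he_im, ha, le_div_iff₀ (by positivity [a.im_pos])]
    nlinarith [a.im_pos]
  · have : (-c.re / (c.re ^ 2 + c.im ^ 2)) ^ 2 + (c.im / (c.re ^ 2 + c.im ^ 2)) ^ 2
        = 1 / (c.re ^ 2 + c.im ^ 2) := by
      field_simp
    rwa [he_re, he_im, this, le_div_iff₀ hcpos, one_mul]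

theorem nearSides_of_mem_metricSegment {a b c p : ℍ} (hp : p ∈ metricSegment a b) :
    NearSides (arsinh 1) p a b c := by
  obtain ⟨e, hep, ha, hb⟩ := exists_isometryEquiv_eq_I_of_mem_metricSegment hp
  rw [← e.nearSides_iff, hep]
  have hI := hep ▸ e.mem_metricSegment_iff.2 hp
  rcases le_total (e a).im (e b).im with hab | hab
  · rw [metricSegment_of_re_eq (ha.trans hb.symm) hab] at hI
    exact nearSides_I_of_im_le_one ha hb (by simpa using hI.2.1) (by simpa using hI.2.2)
  · rw [metricSegment_comm, metricSegment_of_re_eq (hb.trans ha.symm) hab] at hI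
    exact nearSides_swap.1 <|
      nearSides_I_of_im_le_one hb ha (by simpa using hI.2.1) (by simpa using hI.2.2)

end UpperHalfPlane

open UpperHalfPlane in
/-- Every geodesic triangle in the hyperbolic plane ℍ² is δ-thin with
δ = ln(1 + √2). -/
theorem hyperbolic_plane_thin_triangles :
    ∀ T : GeoTriangle UpperHalfPlane, IsThin (Real.log (1 + Real.sqrt 2)) T := by
  intro T i p hp
  rw [← arsinh_one_eq]
  fin_cases i <;>
    simp only [Fin.isValue, GeoTriangle.side, T.h1.image_eq_metricSegment,
      T.h2.image_eq_metricSegment, T.h3.image_eq_metricSegment] at hp ⊢ <;>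
    exact nearSides_of_mem_metricSegment hp
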